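/- arXiv:0802.3640 — 5 statements merged into one kernel-verified Lean document; each statement's English description precedes it below -/
import Mathlib

section
/- Let f ∈ F(Z) (i.e., f : Z → ℝ ∪ {+∞} is proper, convex and f ≥ c on Z). If z₁ = (x₁,x₁*), z₂ = (x₂,x₂*) ∈ Z and ε₁, ε₂ ≥ 0 satisfy f(z₁) ≤ c(z₁) + ε₁ and f(z₂) ≤ c(z₂) + ε₂, then ⟨x₁ − x₂, x₁* − x₂*⟩ ≥ −2(ε₁ + ε₂). -/
open NormedSpace

noncomputable section

/-! Evaluate `f ≥ c` at the midpoint `m` of `z₁, z₂`: convexity of the epigraph gives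
`c m ≤ f m ≤ (c z₁ + ε₁ + c z₂ + ε₂) / 2`, while polarization of the bilinear coupling gives
`⟨x₁ - x₂, x₁* - x₂*⟩ = 2 (c z₁ + c z₂) - 4 c m`. -/

/-- The coupling `c(x, x*) := ⟨x, x*⟩` on `Z := X × X*`. -/
def coup (X : Type*) [NormedAddCommGroup X] [NormedSpace ℝ X]
    (z : X × StrongDual ℝ X) : ℝ := z.2 z.1

theorem le_convexCombo_of_convex_epigraph {E : Type*} [AddCommMonoid E] [Module ℝ E]
    {f : E → EReal} (hconv : Convex ℝ {p : E × ℝ | f p.1 ≤ (p.2 : EReal)})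
    {x y : E} {r s a b : ℝ} (hx : f x ≤ r) (hy : f y ≤ s)
    (ha : 0 ≤ a) (hb : 0 ≤ b) (hab : a + b = 1) :
    f (a • x + b • y) ≤ ((a * r + b * s : ℝ) : EReal) := by
  simpa using hconv (show (x, r) ∈ {p : E × ℝ | f p.1 ≤ (p.2 : EReal)} from hx)
    (show (y, s) ∈ {p : E × ℝ | f p.1 ≤ (p.2 : EReal)} from hy) ha hb hab

theorem coup_polarization_midpoint {X : Type*} [NormedAddCommGroup X] [NormedSpace ℝ X]
    (z₁ z₂ : X × StrongDual ℝ X) :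
    (z₁.2 - z₂.2) (z₁.1 - z₂.1) =
      2 * (coup X z₁ + coup X z₂) - 4 * coup X ((2⁻¹ : ℝ) • z₁ + (2⁻¹ : ℝ) • z₂) := by
  simp only [coup, Prod.fst_add, Prod.snd_add, Prod.smul_fst, Prod.smul_snd,
    add_apply, sub_apply, FunLike.coe_smul, Pi.smul_apply, map_add, map_sub, map_smul, smul_eq_mul]
  ring

theorem stmt0_general {X : Type*} [NormedAddCommGroup X] [NormedSpace ℝ X]
    (f : X × StrongDual ℝ X → EReal)
    (hconv : Convex ℝ {p : (X × StrongDual ℝ X) × ℝ | f p.1 ≤ (p.2 : EReal)})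
    (hge : ∀ z, ((coup X z : ℝ) : EReal) ≤ f z)
    (z₁ z₂ : X × StrongDual ℝ X) (ε₁ ε₂ : ℝ)
    (h₁ : f z₁ ≤ ((coup X z₁ + ε₁ : ℝ) : EReal))
    (h₂ : f z₂ ≤ ((coup X z₂ + ε₂ : ℝ) : EReal)) :
    -2 * (ε₁ + ε₂) ≤ (z₁.2 - z₂.2) (z₁.1 - z₂.1) := by
  have hmid := le_convexCombo_of_convex_epigraph hconv h₁ h₂
    (by norm_num : (0 : ℝ) ≤ 2⁻¹) (by norm_num : (0 : ℝ) ≤ 2⁻¹) (by norm_num)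
  have hcoup : coup X ((2⁻¹ : ℝ) • z₁ + (2⁻¹ : ℝ) • z₂) ≤
      2⁻¹ * (coup X z₁ + ε₁) + 2⁻¹ * (coup X z₂ + ε₂) :=
    EReal.coe_le_coe_iff.mp ((hge _).trans hmid)
  rw [coup_polarization_midpoint]
  linarith

/-- If `f ∈ F(Z)` (proper, convex, `f ≥ c` on `Z`), `f z₁ ≤ c z₁ + ε₁` and
`f z₂ ≤ c z₂ + ε₂` with `ε₁, ε₂ ≥ 0`, then `⟨x₁ - x₂, x₁* - x₂*⟩ ≥ -2(ε₁ + ε₂)`. -/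
theorem stmt0 {X : Type*} [NormedAddCommGroup X] [NormedSpace ℝ X] [CompleteSpace X]
    (f : X × StrongDual ℝ X → EReal)
    (hne_bot : ∀ z, f z ≠ ⊥) (hproper : ∃ z, f z ≠ ⊤)
    (hconv : Convex ℝ {p : (X × StrongDual ℝ X) × ℝ | f p.1 ≤ (p.2 : EReal)})
    (hge : ∀ z, ((coup X z : ℝ) : EReal) ≤ f z)
    (z₁ z₂ : X × StrongDual ℝ X) (ε₁ ε₂ : ℝ) (hε₁ : 0 ≤ ε₁) (hε₂ : 0 ≤ ε₂)
    (h₁ : f z₁ ≤ ((coup X z₁ + ε₁ : ℝ) : EReal))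
    (h₂ : f z₂ ≤ ((coup X z₂ + ε₂ : ℝ) : EReal)) :
    -2 * (ε₁ + ε₂) ≤ (z₁.2 - z₂.2) (z₁.1 - z₂.1) :=
  stmt0_general f hconv hge z₁ z₂ ε₁ ε₂ h₁ h₂
end
end

section
/- Let f ∈ G(Z). Then for every z ∈ Z one has inf_{w ∈ Z} ( f_z(w) + h(w) ) = 0; moreover the dual problem has value 0 and is attained: there exists w* ∈ X* × X** such that ( f*(ẑ + w*) − c(ẑ + w*) ) + ( h*(w*) + c(w*) ) = 0, where h*(u*,u**) = ½‖u*‖² + ½‖u**‖², and every w* ∈ X* × X** satisfies ( f*(ẑ + w*) − c(ẑ + w*) ) + ( h*(w*) + c(w*) ) ≥ 0. -/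
open NormedSpace

noncomputable section

/-- The coupling `c(u*, u**) := ⟨u*, u**⟩` on `Z* := X* × X**`. -/
def coupS (X : Type*) [NormedAddCommGroup X] [NormedSpace ℝ X]
    (p : StrongDual ℝ X × StrongDual ℝ (StrongDual ℝ X)) : ℝ := p.2 p.1

/-- The Fenchel conjugate `f* : X* × X** → ℝ ∪ {±∞}` of `f : Z → ℝ ∪ {+∞}`. -/
def conjF (X : Type*) [NormedAddCommGroup X] [NormedSpace ℝ X]
    (f : X × StrongDual ℝ X → EReal) (p : StrongDual ℝ X × StrongDual ℝ (StrongDual ℝ X)) : EReal :=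
  ⨆ z : X × StrongDual ℝ X, (((p.1 z.1 + p.2 z.2 : ℝ) : EReal) - f z)

/-- `ẑ := (x*, ĵ x)` for `z = (x, x*)`, where `ĵ` is the canonical embedding `X → X**`. -/
def hatz (X : Type*) [NormedAddCommGroup X] [NormedSpace ℝ X]
    (z : X × StrongDual ℝ X) : StrongDual ℝ X × StrongDual ℝ (StrongDual ℝ X) :=
  (z.2, inclusionInDoubleDual ℝ X z.1)

/-- `h(x, x*) := ‖x‖²/2 + ‖x*‖²/2`. -/
def hfun (X : Type*) [NormedAddCommGroup X] [NormedSpace ℝ X]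
    (z : X × StrongDual ℝ X) : ℝ := ‖z.1‖ ^ 2 / 2 + ‖z.2‖ ^ 2 / 2

/-- `h*(u*, u**) = ‖u*‖²/2 + ‖u**‖²/2`. -/
def hstar (X : Type*) [NormedAddCommGroup X] [NormedSpace ℝ X]
    (p : StrongDual ℝ X × StrongDual ℝ (StrongDual ℝ X)) : ℝ := ‖p.1‖ ^ 2 / 2 + ‖p.2‖ ^ 2 / 2

/-!
Weak duality: `f ≥ c ≥ -h` on `Z` and `f* ≥ c ≥ -h*` on `X* × X**` make the primal value
`inf (f_z + h)` and every dual value nonnegative. The dual objective at `w*` is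
`(f_z)*(w*) + h*(w*)`, so Fenchel–Rockafellar duality gives a dual point of value at most `-μ`,
where `μ` is the (finite) primal value: separate the epigraph of `f_z` from the strict
hypograph of `μ - h`, which is open and convex since `h` is continuous and convex. Hence both
values are `0`.
-/

open Set

section Fenchel

variable {E : Type*} [NormedAddCommGroup E] [NormedSpace ℝ E]

theorem exists_dual_le_of_le_add {g : E → EReal}
    (hg : Convex ℝ {p : E × ℝ | g p.1 ≤ p.2}) (hg_top : ∃ w, g w ≠ ⊤)
    {k : E → ℝ} (hk : ConvexOn ℝ univ k) (hk_cont : Continuous k) {μ : ℝ}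
    (hμ : ∀ w, (μ : EReal) ≤ g w + k w) :
    ∃ p : StrongDual ℝ E, ∀ w t, ((μ + p w - k t - p t : ℝ) : EReal) ≤ g w := by
  set S : Set (E × ℝ) := {p | p.2 < μ - k p.1}
  have hS_convex : Convex ℝ S := by
    simpa [S, sub_eq_neg_add] using (hk.neg.add_const μ).convex_strict_hypograph
  have hS_open : IsOpen S := isOpen_lt continuous_snd (by fun_prop)
  have hdisj : Disjoint S {p : E × ℝ | g p.1 ≤ p.2} := by
    refine Set.disjoint_left.2 fun x (hxS : x.2 < μ - k x.1) (hxg : g x.1 ≤ x.2) => ?_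
    refine (hμ x.1).not_gt ?_
    calc g x.1 + k x.1 ≤ ((x.2 + k x.1 : ℝ) : EReal) := by
          rw [EReal.coe_add]; exact add_le_add_left hxg _
      _ < μ := EReal.coe_lt_coe_iff.2 (by linarith)
  obtain ⟨F, u, hFS, hFg⟩ := geometric_hahn_banach_open hS_convex hS_open hg hdisj
  set ℓ : StrongDual ℝ E := F.comp (ContinuousLinearMap.inl ℝ E ℝ)
  set β := F (0, 1)
  have hF : ∀ w r, F (w, r) = ℓ w + r * β := fun w r => by
    rw [show ((w, r) : E × ℝ) = (w, 0) + r • (0, 1) by simp, map_add, map_smul, smul_eq_mul]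
    rfl
  have hS_lt : ∀ t r, r < μ - k t → ℓ t + r * β < u := fun t r hr =>
    hF t r ▸ hFS (t, r) hr
  have hg_le : ∀ w (r : ℝ), g w < r → u ≤ ℓ w + r * β := fun w r hr =>
    hF w r ▸ hFg (w, r) hr.le
  -- the separating hyperplane is not vertical, since `S` and the epigraph share a vertical line
  have hβ : 0 < β := by
    obtain ⟨w₀, hw₀⟩ := hg_top
    obtain ⟨a, ha, -⟩ := EReal.exists_between_coe_real (Ne.lt_top hw₀)
    have h₁ := hS_lt w₀ (min a (μ - k w₀) - 1) (by linarith [min_le_right a (μ - k w₀)])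
    have h₂ := hg_le w₀ a ha
    nlinarith [min_le_left a (μ - k w₀)]
  have hS_le : ∀ t, ℓ t + (μ - k t) * β ≤ u := fun t =>
    le_of_forall_pos_lt_add fun ε hε => by
      have := hS_lt t (μ - k t - ε / β) (by linarith [div_pos hε hβ])
      rw [sub_mul, div_mul_cancel₀ _ hβ.ne'] at this
      linarith
  refine ⟨-(β⁻¹ • ℓ), fun w t => EReal.le_of_forall_lt_iff_le.1 fun r hr => ?_⟩
  have key := (hS_le t).trans (hg_le w r hr)
  rw [EReal.coe_le_coe_iff, ← mul_le_mul_iff_of_pos_right hβ]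
  simp only [neg_apply, smul_apply, smul_eq_mul]
  field_simp
  linarith

end Fenchel

section HalfSqNorm

variable {E : Type*} [NormedAddCommGroup E] [NormedSpace ℝ E]

theorem convexOn_half_sq_norm : ConvexOn ℝ univ fun x : E => ‖x‖ ^ 2 / 2 := by
  simpa [div_eq_inv_mul] using
    (convexOn_univ_norm.pow (fun x _ => norm_nonneg x) 2).smul (by norm_num : (0 : ℝ) ≤ 2⁻¹)

theorem abs_apply_le_half_sq_norm_add (φ : StrongDual ℝ E) (x : E) :
    |φ x| ≤ ‖x‖ ^ 2 / 2 + ‖φ‖ ^ 2 / 2 := by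
  have := two_mul_le_add_sq ‖φ‖ ‖x‖
  have := φ.le_opNorm x
  rw [Real.norm_eq_abs] at this
  nlinarith

theorem exists_half_sq_norm_add_apply_lt (φ : StrongDual ℝ E) {ε : ℝ} (hε : 0 < ε) :
    ∃ x : E, ‖x‖ ^ 2 / 2 + φ x < -(‖φ‖ ^ 2 / 2) + ε := by
  set δ := ε / (‖φ‖ + 1)
  have hδ : ‖φ‖ * δ < ε := by
    rw [mul_div_assoc', div_lt_iff₀ (by positivity)]
    nlinarith
  obtain ⟨x, hx, hφx⟩ : ∃ x : E, ‖x‖ < 1 ∧ ‖φ‖ - δ < φ x := by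
    obtain ⟨x, hx, hφx⟩ :=
      φ.exists_lt_apply_of_lt_opNorm (sub_lt_self ‖φ‖ (show 0 < δ by positivity))
    rcases lt_abs.1 (Real.norm_eq_abs _ ▸ hφx) with h | h
    · exact ⟨x, hx, h⟩
    · exact ⟨-x, by rwa [norm_neg], by rwa [map_neg]⟩
  refine ⟨-(‖φ‖ • x), ?_⟩
  have hnorm : ‖-(‖φ‖ • x)‖ ^ 2 ≤ ‖φ‖ ^ 2 := by
    rw [norm_neg, norm_smul, norm_norm, mul_pow]
    exact mul_le_of_le_one_right (sq_nonneg _) (by nlinarith [norm_nonneg x])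
  rw [map_neg, map_smul, smul_eq_mul]
  nlinarith [norm_nonneg φ]

end HalfSqNorm

theorem EReal.sub_coe_add_coe (x : EReal) (a b : ℝ) : x - a + b = x - (a - b : ℝ) := by
  induction x with
  | bot => simp
  | coe x => norm_cast; ring
  | top => rw [EReal.top_sub_coe, EReal.top_sub_coe, EReal.top_add_coe]

theorem Convex.epigraph_comp_add_sub {E : Type*} [AddCommGroup E] [Module ℝ E] {g : E → EReal}
    (hg : Convex ℝ {p : E × ℝ | g p.1 ≤ p.2}) (z : E) (a : ℝ) (ℓ : E →ₗ[ℝ] ℝ) :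
    Convex ℝ {p : E × ℝ | g (z + p.1) - ((a + ℓ p.1 : ℝ) : EReal) ≤ p.2} := by
  let T : E × ℝ →ᵃ[ℝ] E × ℝ :=
    ⟨fun p => (z + p.1, p.2 + (a + ℓ p.1)),
      (LinearMap.fst ℝ E ℝ).prod (LinearMap.snd ℝ E ℝ + ℓ.comp (LinearMap.fst ℝ E ℝ)),
      fun p v => Prod.ext (add_left_comm _ _ _) <| by
        change _ = (v.2 + ℓ v.1) + _
        simp only [vadd_eq_add, Prod.fst_add, Prod.snd_add, map_add]
        ring⟩
  have hT : {p : E × ℝ | g (z + p.1) - ((a + ℓ p.1 : ℝ) : EReal) ≤ p.2} =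
      T ⁻¹' {p | g p.1 ≤ p.2} := by
    ext p
    simp [T, EReal.sub_le_iff_le_add]
  exact hT ▸ hg.affine_preimage T

section Coupling

variable {X : Type*} [NormedAddCommGroup X] [NormedSpace ℝ X]

theorem neg_coup_le_hfun (w : X × StrongDual ℝ X) : -coup X w ≤ hfun X w :=
  (neg_le_abs _).trans (abs_apply_le_half_sq_norm_add w.2 w.1)

theorem neg_coupS_le_hstar (q : StrongDual ℝ X × StrongDual ℝ (StrongDual ℝ X)) :
    -coupS X q ≤ hstar X q :=
  (neg_le_abs _).trans (abs_apply_le_half_sq_norm_add q.2 q.1)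

theorem convexOn_hfun : ConvexOn ℝ univ (hfun X) :=
  (convexOn_half_sq_norm.comp_linearMap (LinearMap.fst ℝ X _)).add
    (convexOn_half_sq_norm.comp_linearMap (LinearMap.snd ℝ X _))

theorem continuous_hfun : Continuous (hfun X) := by
  unfold hfun
  fun_prop

theorem le_neg_hstar_of_forall_le {q : StrongDual ℝ X × StrongDual ℝ (StrongDual ℝ X)}
    {a : ℝ} (h : ∀ t, a ≤ hfun X t + q.1.coprod q.2 t) : a ≤ -hstar X q :=
  le_of_forall_pos_lt_add fun ε hε => by
    obtain ⟨x, hx⟩ := exists_half_sq_norm_add_apply_lt q.1 (half_pos hε)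
    obtain ⟨y, hy⟩ := exists_half_sq_norm_add_apply_lt q.2 (half_pos hε)
    have := h (x, y)
    simp only [hfun, hstar, ContinuousLinearMap.coprod_apply] at this ⊢
    linarith

end Coupling

section Duality

variable {X : Type*} [NormedAddCommGroup X] [NormedSpace ℝ X]
  {f : X × StrongDual ℝ X → EReal}

/-- The function `f_z` of the paper. -/
def shiftedFun (f : X × StrongDual ℝ X → EReal) (z w : X × StrongDual ℝ X) : EReal :=
  f (z + w) - ((coup X (z + w) : ℝ) : EReal) + ((coup X w : ℝ) : EReal)

def dualObj (f : X × StrongDual ℝ X → EReal) (z : X × StrongDual ℝ X)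
    (q : StrongDual ℝ X × StrongDual ℝ (StrongDual ℝ X)) : EReal :=
  (conjF X f (hatz X z + q) - ((coupS X (hatz X z + q) : ℝ) : EReal))
    + ((hstar X q + coupS X q : ℝ) : EReal)

theorem shiftedFun_eq (f : X × StrongDual ℝ X → EReal) (z w : X × StrongDual ℝ X) :
    shiftedFun f z w =
      f (z + w) - ((coup X z + (hatz X z).1.coprod (hatz X z).2 w : ℝ) : EReal) := by
  rw [shiftedFun, EReal.sub_coe_add_coe]
  congr 2
  simp only [coup, hatz, Prod.fst_add, Prod.snd_add, add_apply, map_add,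
    ContinuousLinearMap.coprod_apply, dual_def]
  ring

theorem shiftedFun_ne_top {z w : X × StrongDual ℝ X} (h : f (z + w) ≠ ⊤) :
    shiftedFun f z w ≠ ⊤ := by
  rw [shiftedFun_eq, sub_eq_add_neg, ← EReal.coe_neg]
  exact EReal.add_ne_top h (EReal.coe_ne_top _)

theorem convex_epigraph_shiftedFun
    (hf : Convex ℝ {p : (X × StrongDual ℝ X) × ℝ | f p.1 ≤ p.2})
    (z : X × StrongDual ℝ X) :
    Convex ℝ {p : (X × StrongDual ℝ X) × ℝ | shiftedFun f z p.1 ≤ p.2} := by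
  simpa only [shiftedFun_eq, ContinuousLinearMap.coe_coe] using
    hf.epigraph_comp_add_sub z _ ((hatz X z).1.coprod (hatz X z).2)

theorem shiftedFun_add_hfun_nonneg (hf : ∀ v, ((coup X v : ℝ) : EReal) ≤ f v)
    (z w : X × StrongDual ℝ X) : 0 ≤ shiftedFun f z w + hfun X w := by
  rw [shiftedFun, add_assoc, ← EReal.coe_add]
  refine add_nonneg ?_ (EReal.coe_nonneg.2 (by linarith [neg_coup_le_hfun w]))
  exact EReal.sub_nonneg (.inr (EReal.coe_ne_top _)) (.inr (EReal.coe_ne_bot _)) |>.2 (hf _)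

theorem dualObj_nonneg (hf : ∀ p, ((coupS X p : ℝ) : EReal) ≤ conjF X f p)
    (z : X × StrongDual ℝ X) (q : StrongDual ℝ X × StrongDual ℝ (StrongDual ℝ X)) :
    0 ≤ dualObj f z q := by
  refine add_nonneg ?_ (EReal.coe_nonneg.2 (by linarith [neg_coupS_le_hstar q]))
  exact EReal.sub_nonneg (.inr (EReal.coe_ne_top _)) (.inr (EReal.coe_ne_bot _)) |>.2 (hf _)

theorem conjF_hatz_add_le {z : X × StrongDual ℝ X}
    {q : StrongDual ℝ X × StrongDual ℝ (StrongDual ℝ X)} {a : ℝ}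
    (h : ∀ w, ((a + q.1.coprod q.2 w : ℝ) : EReal) ≤ shiftedFun f z w) :
    conjF X f (hatz X z + q) ≤ ((coupS X (hatz X z + q) - coupS X q - a : ℝ) : EReal) := by
  refine iSup_le fun v => ?_
  have hv := h (v - z)
  rw [shiftedFun_eq, add_sub_cancel,
    EReal.le_sub_iff_add_le (.inl (EReal.coe_ne_bot _)) (.inl (EReal.coe_ne_top _)),
    ← EReal.coe_add] at hv
  calc _ ≤ _ - _ := EReal.sub_le_sub le_rfl hv
    _ = _ := by
      rw [← EReal.coe_sub, EReal.coe_eq_coe_iff]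
      simp only [coup, coupS, hatz, Prod.fst_add, Prod.snd_add, add_apply, map_add, map_sub,
        ContinuousLinearMap.coprod_apply, dual_def]
      ring

theorem exists_dualObj_le_neg (hf : Convex ℝ {p : (X × StrongDual ℝ X) × ℝ | f p.1 ≤ p.2})
    (hf_top : ∃ v, f v ≠ ⊤) (z : X × StrongDual ℝ X) {μ : ℝ}
    (hμ : ∀ w, (μ : EReal) ≤ shiftedFun f z w + hfun X w) :
    ∃ q, dualObj f z q ≤ ((-μ : ℝ) : EReal) := by
  obtain ⟨v, hv⟩ := hf_top
  obtain ⟨p, hp⟩ := exists_dual_le_of_le_add (convex_epigraph_shiftedFun hf z)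
    ⟨v - z, shiftedFun_ne_top (by rwa [add_sub_cancel])⟩ convexOn_hfun continuous_hfun hμ
  set q : StrongDual ℝ X × StrongDual ℝ (StrongDual ℝ X) :=
    (p.comp (.inl ℝ X _), p.comp (.inr ℝ X _))
  have hq : q.1.coprod q.2 = p := p.coprod_comp_inl_inr
  -- minimizing `hp w t` over `t` brings in `-h*(q) = inf_t (h t + q t)`
  have hshift :
      ∀ w, ((μ + hstar X q + q.1.coprod q.2 w : ℝ) : EReal) ≤ shiftedFun f z w := by
    intro w
    refine EReal.le_of_forall_lt_iff_le.1 fun r hr => EReal.coe_le_coe_iff.2 ?_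
    have hr_le : μ + p w - r ≤ -hstar X q := le_neg_hstar_of_forall_le fun t => by
      have := EReal.coe_le_coe_iff.1 ((hp w t).trans hr.le)
      rw [hq]
      linarith
    rw [hq]
    linarith
  refine ⟨q, ?_⟩
  calc dualObj f z q ≤ (((coupS X (hatz X z + q) - coupS X q - (μ + hstar X q) : ℝ) : EReal)
        - coupS X (hatz X z + q)) + (hstar X q + coupS X q : ℝ) :=
      add_le_add_left (EReal.sub_le_sub (conjF_hatz_add_le hshift) le_rfl) _
    _ = ((-μ : ℝ) : EReal) := by norm_cast; ring

end Duality

theorem stmt1_general {X : Type*} [NormedAddCommGroup X] [NormedSpace ℝ X]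
    (f : X × StrongDual ℝ X → EReal)
    (hproper : ∃ z, f z ≠ ⊤)
    (hconv : Convex ℝ {p : (X × StrongDual ℝ X) × ℝ | f p.1 ≤ (p.2 : EReal)})
    (hge : ∀ z, ((coup X z : ℝ) : EReal) ≤ f z)
    (hgeS : ∀ p, ((coupS X p : ℝ) : EReal) ≤ conjF X f p)
    (z : X × StrongDual ℝ X) :
    (⨅ w : X × StrongDual ℝ X,
        (f (z + w) - ((coup X (z + w) : ℝ) : EReal) + ((coup X w : ℝ) : EReal)
          + ((hfun X w : ℝ) : EReal)) = 0) ∧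
    (∃ w : StrongDual ℝ X × StrongDual ℝ (StrongDual ℝ X),
        (conjF X f (hatz X z + w) - ((coupS X (hatz X z + w) : ℝ) : EReal))
          + ((hstar X w + coupS X w : ℝ) : EReal) = 0) ∧
    (∀ w : StrongDual ℝ X × StrongDual ℝ (StrongDual ℝ X),
        0 ≤ (conjF X f (hatz X z + w) - ((coupS X (hatz X z + w) : ℝ) : EReal))
          + ((hstar X w + coupS X w : ℝ) : EReal)) := by
  change ⨅ w, shiftedFun f z w + hfun X w = 0 ∧ (∃ q, dualObj f z q = 0) ∧
    ∀ q, 0 ≤ dualObj f z q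
  set m := ⨅ w, shiftedFun f z w + hfun X w
  have hm_nonneg : 0 ≤ m := le_iInf (shiftedFun_add_hfun_nonneg hge z)
  have hm_ne_top : m ≠ ⊤ := by
    obtain ⟨v, hv⟩ := hproper
    refine ne_top_of_le_ne_top ?_ (iInf_le _ (v - z))
    exact EReal.add_ne_top (shiftedFun_ne_top (by rwa [add_sub_cancel])) (EReal.coe_ne_top _)
  obtain ⟨μ, hμ⟩ : ∃ μ : ℝ, m = μ := ⟨m.toReal,
    (EReal.coe_toReal hm_ne_top (ne_bot_of_le_ne_bot EReal.zero_ne_bot hm_nonneg)).symm⟩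
  obtain ⟨q, hq⟩ :=
    exists_dualObj_le_neg hconv hproper z fun w => hμ.symm.trans_le (iInf_le _ w)
  have hdual := dualObj_nonneg hgeS z
  have hμ_zero : μ = 0 := by
    have hμ_le : 0 ≤ -μ := EReal.coe_le_coe_iff.1 ((hdual q).trans hq)
    have hμ_ge : 0 ≤ μ := EReal.coe_le_coe_iff.1 (hμ ▸ hm_nonneg)
    linarith
  subst hμ_zero
  exact ⟨hμ, ⟨q, le_antisymm (by simpa using hq) (hdual q)⟩, hdual⟩

/-- For `f ∈ G(Z)` and every `z ∈ Z`, `inf_w (f_z(w) + h(w)) = 0`; moreover the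
dual problem has value `0` and is attained, and every `w* ∈ X* × X**` gives a nonnegative
dual objective value. -/
theorem stmt1 {X : Type*} [NormedAddCommGroup X] [NormedSpace ℝ X] [CompleteSpace X]
    (f : X × StrongDual ℝ X → EReal)
    (hne_bot : ∀ z, f z ≠ ⊥) (hproper : ∃ z, f z ≠ ⊤)
    (hconv : Convex ℝ {p : (X × StrongDual ℝ X) × ℝ | f p.1 ≤ (p.2 : EReal)})
    (hge : ∀ z, ((coup X z : ℝ) : EReal) ≤ f z)
    (hgeS : ∀ p, ((coupS X p : ℝ) : EReal) ≤ conjF X f p)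
    (z : X × StrongDual ℝ X) :
    (⨅ w : X × StrongDual ℝ X,
        (f (z + w) - ((coup X (z + w) : ℝ) : EReal) + ((coup X w : ℝ) : EReal)
          + ((hfun X w : ℝ) : EReal)) = 0) ∧
    (∃ w : StrongDual ℝ X × StrongDual ℝ (StrongDual ℝ X),
        (conjF X f (hatz X z + w) - ((coupS X (hatz X z + w) : ℝ) : EReal))
          + ((hstar X w + coupS X w : ℝ) : EReal) = 0) ∧
    (∀ w : StrongDual ℝ X × StrongDual ℝ (StrongDual ℝ X),
        0 ≤ (conjF X f (hatz X z + w) - ((coupS X (hatz X z + w) : ℝ) : EReal))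
          + ((hstar X w + coupS X w : ℝ) : EReal)) :=
  stmt1_general f hproper hconv hge hgeS z
end
end

section
/- Let f ∈ G(Z). For every z = (x,x*) ∈ Z there exists z* ∈ X* × X** with f*(z*) = c(z*) (i.e., z* ∈ M_{f*}) such that ẑ − z* belongs to the graph of −F_{X*} (i.e., writing ẑ − z* = (v*,v**), one has ‖v*‖² = ‖v**‖² = −⟨v*,v**⟩) and ‖ẑ − z*‖² ≤ 2( f*(ẑ) − c(ẑ) ). Moreover (√2 − 1)‖ẑ − z*‖ ≤ d(ẑ, M_{f*}) ≤ √( 2( f*(ẑ) − c(ẑ) ) ), where d is the distance in X* × X** for the norm ‖(u*,u**)‖ := (‖u*‖² + ‖u**‖²)^{1/2}. -/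
open NormedSpace

noncomputable section

/-- The `ℓ²`-norm `‖(a, b)‖ := (‖a‖² + ‖b‖²)^{1/2}` on a product. -/
def nrm2 {A B : Type*} [NormedAddCommGroup A] [NormedAddCommGroup B] (p : A × B) : ℝ :=
  Real.sqrt (‖p.1‖ ^ 2 + ‖p.2‖ ^ 2)

/-!
The concave function `g w = ⟨ẑ, w⟩ - c(z) - ½‖w - z‖²` lies below `c`, hence below `f`, so
separating the epigraph of `f` from the strict hypograph of `g` yields an affine function
`κ + ⟨z*, ·⟩` with `g ≤ κ + ⟨z*, ·⟩ ≤ f`. The second inequality gives `f*(z*) ≤ -κ`; the first,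
after a supremum over `w`, gives `½‖ẑ - z*‖² ≤ κ + ⟨z*, z⟩ - c(z)`. Since
`c(ẑ - z*) = c(z) - ⟨z*, z⟩ + c(z*)` and `c ≤ f*`, this forces `c(ẑ - z*) ≤ -½‖ẑ - z*‖²`, which
is only possible with equality throughout: `ẑ - z* ∈ gph(-F_{X*})` and `f*(z*) = c(z*)`.

Convexity of `f*` together with `c ≤ f*` does the rest. At midpoints it makes `M_{f*}` monotone,
and along the segment from `z*` to `ẑ` it gives `f*(ẑ) ≥ c(ẑ) - c(ẑ - z*) = c(ẑ) + ½‖ẑ - z*‖²`.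
For `w ∈ M_{f*}`, monotonicity against `z*` is a quadratic inequality in `‖ẑ - z*‖` with
coefficients bounded by `‖ẑ - w‖`; its root gives the factor `√2 - 1`.
-/

open Set Filter Topology

section NormSquare

variable {E F : Type*} [NormedAddCommGroup E] [NormedSpace ℝ E]
  [NormedAddCommGroup F] [NormedSpace ℝ F]

theorem neg_half_sq_add_le_apply (φ : StrongDual ℝ E) (x : E) :
    -((‖x‖ ^ 2 + ‖φ‖ ^ 2) / 2) ≤ φ x := by
  have h : -(‖φ‖ * ‖x‖) ≤ φ x := neg_le_of_abs_le (φ.le_opNorm x)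
  nlinarith [sq_nonneg (‖x‖ - ‖φ‖)]

theorem sq_opNorm_div_two_le (φ : StrongDual ℝ E) {α : ℝ}
    (h : ∀ y, φ y - ‖y‖ ^ 2 / 2 ≤ α) : ‖φ‖ ^ 2 / 2 ≤ α := by
  set t := ‖φ‖
  have hα : 0 ≤ α := by simpa using h 0
  have hbound : ‖t • φ‖ ≤ α + t ^ 2 / 2 := by
    refine ContinuousLinearMap.opNorm_le_of_unit_norm (by positivity) fun y hy => ?_
    have h₁ := h (t • y)
    have h₂ := h (-(t • y))
    simp only [map_neg, map_smul, norm_neg, norm_smul, hy, Real.norm_eq_abs, smul_eq_mul,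
      mul_one] at h₁ h₂
    rw [abs_of_nonneg (norm_nonneg φ)] at h₁ h₂
    rw [smul_apply, smul_eq_mul, Real.norm_eq_abs, abs_le]
    constructor <;> linarith
  rw [norm_smul, Real.norm_eq_abs, abs_norm] at hbound
  nlinarith

theorem sq_norm_add_sq_norm_div_two_le (φ : StrongDual ℝ E) (ψ : StrongDual ℝ F) {α : ℝ}
    (h : ∀ x y, φ x + ψ y - (‖x‖ ^ 2 + ‖y‖ ^ 2) / 2 ≤ α) :
    (‖φ‖ ^ 2 + ‖ψ‖ ^ 2) / 2 ≤ α := by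
  have hψ : ∀ y, ψ y - ‖y‖ ^ 2 / 2 ≤ α - ‖φ‖ ^ 2 / 2 := fun y => by
    have := sq_opNorm_div_two_le φ (α := α - (ψ y - ‖y‖ ^ 2 / 2)) fun x => by linarith [h x y]
    linarith
  linarith [sq_opNorm_div_two_le ψ hψ]

end NormSquare

section NegDuality

variable {E : Type*} [NormedAddCommGroup E] [NormedSpace ℝ E]

/-- `v ∈ gph(-F_E)`, where `F_E x = {φ | ‖x‖² = ‖φ‖² = φ x}` is the duality map of `E`. -/
def IsNegDualityPair (v : E × StrongDual ℝ E) : Prop :=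
  ‖v.1‖ = ‖v.2‖ ∧ v.2 v.1 = -‖v.1‖ ^ 2

theorem isNegDualityPair_of_apply_le {v : E × StrongDual ℝ E}
    (h : v.2 v.1 ≤ -((‖v.1‖ ^ 2 + ‖v.2‖ ^ 2) / 2)) : IsNegDualityPair v := by
  have hle : -(‖v.2‖ * ‖v.1‖) ≤ v.2 v.1 := neg_le_of_abs_le (v.2.le_opNorm v.1)
  have hsq : (‖v.1‖ - ‖v.2‖) ^ 2 = 0 := le_antisymm (by nlinarith) (sq_nonneg _)
  have hnorm : ‖v.1‖ = ‖v.2‖ := sub_eq_zero.1 (pow_eq_zero_iff two_ne_zero |>.1 hsq)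
  refine ⟨hnorm, ?_⟩
  rw [← hnorm] at h hle
  linarith

theorem IsNegDualityPair.nrm2_sq {v : E × StrongDual ℝ E} (hv : IsNegDualityPair v) :
    nrm2 v ^ 2 = 2 * -v.2 v.1 := by
  rw [nrm2, Real.sq_sqrt (by positivity), hv.2, ← hv.1]
  ring

theorem IsNegDualityPair.sqrt_two_sub_one_mul_nrm2_le {v u : E × StrongDual ℝ E}
    (hv : IsNegDualityPair v) (hmono : 0 ≤ (u - v).2 (u - v).1) :
    (Real.sqrt 2 - 1) * nrm2 v ≤ nrm2 u := by
  obtain ⟨hnorm, hvv⟩ := hv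
  set a := ‖v.1‖
  have ha : 0 ≤ a := norm_nonneg _
  have hs : Real.sqrt 2 ^ 2 = 2 := Real.sq_sqrt zero_le_two
  have hs2 : Real.sqrt 2 < 2 := by nlinarith [Real.sqrt_nonneg 2]
  have hN : nrm2 u ^ 2 = ‖u.1‖ ^ 2 + ‖u.2‖ ^ 2 := Real.sq_sqrt (by positivity)
  have hN0 : 0 ≤ nrm2 u := Real.sqrt_nonneg _
  have hnv : nrm2 v = Real.sqrt 2 * a := by
    rw [nrm2, ← hnorm, ← two_mul, Real.sqrt_mul zero_le_two, Real.sqrt_sq ha]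
  have hexp : (u - v).2 (u - v).1 = u.2 u.1 - u.2 v.1 - v.2 u.1 + v.2 v.1 := by
    simp only [Prod.fst_sub, Prod.snd_sub, sub_apply, map_sub]; ring
  have h₁ : u.2 u.1 ≤ ‖u.2‖ * ‖u.1‖ := le_of_abs_le (u.2.le_opNorm u.1)
  have h₂ : -(‖u.2‖ * a) ≤ u.2 v.1 := neg_le_of_abs_le (u.2.le_opNorm v.1)
  have h₃ : -(a * ‖u.1‖) ≤ v.2 u.1 := by rw [hnorm]; exact neg_le_of_abs_le (v.2.le_opNorm u.1)
  have hsum : ‖u.1‖ + ‖u.2‖ ≤ Real.sqrt 2 * nrm2 u := by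
    refine abs_le_of_sq_le_sq' ?_ (by positivity) |>.2
    nlinarith [sq_nonneg (‖u.1‖ - ‖u.2‖)]
  have hquad : a ^ 2 ≤ nrm2 u ^ 2 / 2 + Real.sqrt 2 * a * nrm2 u := by
    nlinarith [sq_nonneg (‖u.1‖ - ‖u.2‖), mul_le_mul_of_nonneg_left hsum ha]
  -- with `N = nrm2 u`, the larger root of `a² - √2 a N - N² / 2` is `(2 + √2) N / 2`,
  -- and `(√2 - 1) √2 (2 + √2) / 2 = 1`
  have hroot : a ≤ (2 + Real.sqrt 2) * nrm2 u / 2 := by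
    nlinarith [mul_nonneg hN0 (sub_nonneg.2 hs2.le)]
  rw [hnv]
  nlinarith [mul_le_mul_of_nonneg_left hroot (sub_nonneg.2 hs2.le)]

end NegDuality

theorem convexOn_univ_sq_norm_sub {V : Type*} [SeminormedAddCommGroup V] [NormedSpace ℝ V]
    (v₀ : V) :
    ConvexOn ℝ univ fun v : V => ‖v - v₀‖ ^ 2 := by
  refine ((convexOn_univ_norm.pow (fun _ _ => norm_nonneg _) 2).translate_right (-v₀)).congr
    fun v _ => ?_
  simp [sub_eq_neg_add]

theorem concaveOn_sub_sq_norm_sub {V W : Type*} [SeminormedAddCommGroup V] [NormedSpace ℝ V]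
    [SeminormedAddCommGroup W] [NormedSpace ℝ W] (ℓ : StrongDual ℝ (V × W)) (c : ℝ) (z : V × W) :
    ConcaveOn ℝ univ fun w : V × W => ℓ w - c - (‖w.1 - z.1‖ ^ 2 + ‖w.2 - z.2‖ ^ 2) / 2 := by
  have hQ := (((convexOn_univ_sq_norm_sub z.1).comp_linearMap (LinearMap.fst ℝ V W)).add
    ((convexOn_univ_sq_norm_sub z.2).comp_linearMap (LinearMap.snd ℝ V W))).smul
    (by norm_num : (0 : ℝ) ≤ 1 / 2)
  refine ((((ℓ : V × W →ₗ[ℝ] ℝ).concaveOn convex_univ).add_const (-c)).sub hQ).congr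
    fun w _ => ?_
  simp only [ContinuousLinearMap.coe_coe, one_div, LinearMap.coe_fst, LinearMap.coe_snd,
    Pi.add_apply, Function.comp_apply, smul_eq_mul, Pi.sub_apply]
  ring

theorem exists_affine_between {E : Type*} [TopologicalSpace E] [AddCommGroup E] [Module ℝ E]
    [IsTopologicalAddGroup E] [ContinuousSMul ℝ E] {f : E → EReal} {g : E → ℝ}
    (hf : Convex ℝ {p : E × ℝ | f p.1 ≤ p.2}) (hf_top : ∃ x, f x ≠ ⊤)
    (hg : ConcaveOn ℝ univ g) (hg_cont : Continuous g) (hgf : ∀ x, (g x : EReal) ≤ f x) :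
    ∃ (ℓ : StrongDual ℝ E) (κ : ℝ), ∀ x, g x ≤ ℓ x + κ ∧ ((ℓ x + κ : ℝ) : EReal) ≤ f x := by
  have hdisj : Disjoint {p : E × ℝ | p.2 < g p.1} {p | f p.1 ≤ p.2} :=
    disjoint_left.2 fun p hlt hle => (hgf p.1).trans hle |>.not_gt (EReal.coe_lt_coe_iff.2 hlt)
  obtain ⟨F, u, hlt, hle⟩ := geometric_hahn_banach_open (by simpa using hg.convex_strict_hypograph)
    (isOpen_lt continuous_snd (hg_cont.comp continuous_fst)) hf hdisj
  set ℓ₀ := F.comp (.inl ℝ E ℝ)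
  set β := F (0, 1)
  have hF : ∀ x r, F (x, r) = ℓ₀ x + r * β := fun x r => by
    have : (x, r) = (x, 0) + r • ((0 : E), (1 : ℝ)) := by simp
    rw [this, map_add, map_smul, smul_eq_mul]
    rfl
  -- a point of the epigraph above a point of the strict hypograph forces `β > 0`
  have hβ : 0 < β := by
    obtain ⟨x₀, hx₀⟩ := hf_top
    obtain ⟨ρ₀, hρ₀⟩ : ∃ ρ₀ : ℝ, f x₀ < ρ₀ :=
      (EReal.lt_iff_exists_real_btwn.1 hx₀.lt_top).imp fun _ h => h.1
    have hgρ₀ : g x₀ < ρ₀ := EReal.coe_lt_coe_iff.1 ((hgf x₀).trans_lt hρ₀)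
    have h₁ := hlt (x₀, g x₀ - 1) (by simp)
    have h₂ := hle (x₀, ρ₀) hρ₀.le
    rw [hF] at h₁ h₂
    nlinarith
  have hℓ : ∀ x, (-β⁻¹ • ℓ₀) x + u / β = (u - ℓ₀ x) / β := fun x => by
    simp only [smul_apply, smul_eq_mul]
    field_simp
    ring
  refine ⟨-β⁻¹ • ℓ₀, u / β, fun x => ⟨le_of_forall_lt fun r hr => ?_, ?_⟩⟩
  · have h := hlt (x, r) hr
    rw [hF] at h
    rw [hℓ, lt_div_iff₀ hβ]
    linarith
  · refine EReal.le_of_forall_lt_iff_le.1 fun ρ hρ => EReal.coe_le_coe_iff.2 ?_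
    have h := hle (x, ρ) hρ.le
    rw [hF] at h
    rw [hℓ, div_le_iff₀ hβ]
    linarith

theorem EReal.coe_two_mul_neg_le_two_mul_sub {b d : ℝ} {F : EReal}
    (h : ((b - d : ℝ) : EReal) ≤ F) : ((2 * -d : ℝ) : EReal) ≤ 2 * (F - b) := by
  induction F using EReal.rec with
  | bot => exact absurd h (EReal.bot_lt_coe _).not_ge
  | coe s =>
    rw [← EReal.coe_sub, show (2 : EReal) = ((2 : ℝ) : EReal) from rfl, ← EReal.coe_mul,
      EReal.coe_le_coe_iff]
    linarith [EReal.coe_le_coe_iff.1 h]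
  | top => simp [EReal.mul_top_of_pos two_pos]

section Conjugate

variable {X : Type*} [NormedAddCommGroup X] [NormedSpace ℝ X] {f : X × StrongDual ℝ X → EReal}
  {p q : StrongDual ℝ X × StrongDual ℝ (StrongDual ℝ X)}

theorem conjF_le_coe_iff {r : StrongDual ℝ X × StrongDual ℝ (StrongDual ℝ X)} {K : ℝ} :
    conjF X f r ≤ K ↔ ∀ w (ρ : ℝ), f w ≤ ρ → r.1 w.1 + r.2 w.2 - ρ ≤ K := by
  refine ⟨fun h w ρ hρ => EReal.coe_le_coe_iff.1 ?_, fun h => iSup_le fun w => ?_⟩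
  · calc ((r.1 w.1 + r.2 w.2 - ρ : ℝ) : EReal) ≤ (r.1 w.1 + r.2 w.2 : ℝ) - f w :=
          by rw [EReal.coe_sub]; exact EReal.sub_le_sub le_rfl hρ
      _ ≤ conjF X f r := le_iSup (fun w => ((r.1 w.1 + r.2 w.2 : ℝ) : EReal) - f w) w
      _ ≤ K := h
  · induction hw : f w using EReal.rec with
    | bot => linarith [h w (r.1 w.1 + r.2 w.2 - K - 1) (by simp [hw])]
    | coe ρ => exact_mod_cast h w ρ hw.le
    | top => simp

theorem conjF_le_of_affine_le {r : StrongDual ℝ X × StrongDual ℝ (StrongDual ℝ X)} {κ : ℝ}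
    (h : ∀ w, ((κ + (r.1 w.1 + r.2 w.2) : ℝ) : EReal) ≤ f w) : conjF X f r ≤ ((-κ : ℝ) : EReal) :=
  conjF_le_coe_iff.2 fun w ρ hρ => by linarith [EReal.coe_le_coe_iff.1 ((h w).trans hρ)]

theorem conjF_combo_le {P Q a b : ℝ}
    (hp : conjF X f p ≤ P) (hq : conjF X f q ≤ Q) (ha : 0 ≤ a) (hb : 0 ≤ b) (hab : a + b = 1) :
    conjF X f (a • p + b • q) ≤ ((a * P + b * Q : ℝ) : EReal) := by
  refine conjF_le_coe_iff.2 fun w ρ hρ => ?_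
  have hp' := conjF_le_coe_iff.1 hp w ρ hρ
  have hq' := conjF_le_coe_iff.1 hq w ρ hρ
  have hexp : (a • p + b • q).1 w.1 + (a • p + b • q).2 w.2 - ρ
      = a * (p.1 w.1 + p.2 w.2 - ρ) + b * (q.1 w.1 + q.2 w.2 - ρ) := by
    simp only [Prod.fst_add, Prod.snd_add, Prod.smul_fst, Prod.smul_snd, add_apply, smul_apply,
      smul_eq_mul]
    linear_combination ρ * hab
  rw [hexp]
  gcongr

theorem coupS_combo {a b : ℝ} (hab : a + b = 1) :
    coupS X (a • p + b • q) = a * coupS X p + b * coupS X q - a * b * coupS X (p - q) := by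
  obtain rfl := eq_sub_of_add_eq' hab
  simp only [coupS, Prod.fst_add, Prod.snd_add, Prod.smul_fst, Prod.smul_snd, Prod.fst_sub,
    Prod.snd_sub, add_apply, smul_apply, sub_apply, map_add, map_smul, map_sub, smul_eq_mul]
  ring

theorem coupS_combo_le (hgeS : ∀ p, ((coupS X p : ℝ) : EReal) ≤ conjF X f p) {P Q a b : ℝ}
    (hp : conjF X f p ≤ P) (hq : conjF X f q ≤ Q) (ha : 0 ≤ a) (hb : 0 ≤ b) (hab : a + b = 1) :
    a * coupS X p + b * coupS X q - a * b * coupS X (p - q) ≤ a * P + b * Q := by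
  rw [← coupS_combo hab]
  exact EReal.coe_le_coe_iff.1 ((hgeS _).trans (conjF_combo_le hp hq ha hb hab))

theorem coupS_sub_nonneg (hgeS : ∀ p, ((coupS X p : ℝ) : EReal) ≤ conjF X f p)
    (hp : conjF X f p = coupS X p) (hq : conjF X f q = coupS X q) : 0 ≤ coupS X (p - q) := by
  have := coupS_combo_le hgeS hp.le hq.le (a := 1 / 2) (b := 1 / 2) (by norm_num) (by norm_num)
    (by norm_num)
  linarith

theorem coupS_sub_coupS_sub_le_conjF (hgeS : ∀ p, ((coupS X p : ℝ) : EReal) ≤ conjF X f p)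
    (hp : conjF X f p = coupS X p) (x : StrongDual ℝ X × StrongDual ℝ (StrongDual ℝ X)) :
    ((coupS X x - coupS X (x - p) : ℝ) : EReal) ≤ conjF X f x := by
  refine EReal.le_of_forall_lt_iff_le.1 fun s hs => EReal.coe_le_coe_iff.2 ?_
  have hc : coupS X (p - x) = coupS X (x - p) := by
    simp only [coupS, Prod.fst_sub, Prod.snd_sub, sub_apply, map_sub]; ring
  have hseg : ∀ t ∈ Ioc (0 : ℝ) 1, coupS X x - (1 - t) * coupS X (x - p) ≤ s := fun t ht => by
    have := coupS_combo_le hgeS hp.le hs.le (sub_nonneg.2 ht.2) ht.1.le (sub_add_cancel 1 t)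
    rw [hc] at this
    nlinarith [ht.1]
  have hlim : Tendsto (fun t => coupS X x - (1 - t) * coupS X (x - p)) (𝓝[>] 0)
      (𝓝 (coupS X x - coupS X (x - p))) := by
    refine tendsto_nhdsWithin_of_tendsto_nhds ?_
    convert (by fun_prop : Continuous fun t : ℝ => coupS X x - (1 - t) * coupS X (x - p)).tendsto 0
      using 2
    ring
  exact le_of_tendsto hlim (eventually_of_mem (Ioc_mem_nhdsGT one_pos) hseg)

theorem exists_affine_minorant_near
    (hconv : Convex ℝ {p : (X × StrongDual ℝ X) × ℝ | f p.1 ≤ (p.2 : EReal)})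
    (hproper : ∃ z, f z ≠ ⊤) (hge : ∀ z, ((coup X z : ℝ) : EReal) ≤ f z) (z : X × StrongDual ℝ X) :
    ∃ (zs : StrongDual ℝ X × StrongDual ℝ (StrongDual ℝ X)) (κ : ℝ),
      (∀ w, ((κ + (zs.1 w.1 + zs.2 w.2) : ℝ) : EReal) ≤ f w) ∧
      (‖(hatz X z - zs).1‖ ^ 2 + ‖(hatz X z - zs).2‖ ^ 2) / 2
        ≤ κ + (zs.1 z.1 + zs.2 z.2) - coup X z := by
  set L := (hatz X z).1.coprod (hatz X z).2
  set g := fun w : X × StrongDual ℝ X =>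
    L w - coup X z - (‖w.1 - z.1‖ ^ 2 + ‖w.2 - z.2‖ ^ 2) / 2
  have hg_le : ∀ w, g w ≤ coup X w := fun w => by
    have := neg_half_sq_add_le_apply (w.2 - z.2) (w.1 - z.1)
    simp only [sub_apply, map_sub, hatz, ContinuousLinearMap.coprod_apply, dual_def, coup, g, L]
      at this ⊢
    linarith
  obtain ⟨ℓ, κ, hℓ⟩ := exists_affine_between hconv hproper (concaveOn_sub_sq_norm_sub L _ z)
    (by fun_prop) fun w => (EReal.coe_le_coe_iff.2 (hg_le w)).trans (hge w)
  refine ⟨(ℓ.comp (.inl ℝ _ _), ℓ.comp (.inr ℝ _ _)), κ, fun w => ?_, ?_⟩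
  · rw [ℓ.comp_inl_add_comp_inr, add_comm]
    exact (hℓ w).2
  · refine sq_norm_add_sq_norm_div_two_le _ _ fun x y => ?_
    have := (hℓ (z + (x, y))).1
    rw [map_add ℓ, ← ℓ.comp_inl_add_comp_inr z, ← ℓ.comp_inl_add_comp_inr (x, y)] at this
    simp only [hatz, ContinuousLinearMap.coprod_apply, Prod.fst_add, map_add, Prod.snd_add,
      dual_def, coup, add_sub_cancel_left, ContinuousLinearMap.comp_apply,
      ContinuousLinearMap.inl_apply, ContinuousLinearMap.inr_apply, Prod.mk_sub_mk, sub_apply, L]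
      at this ⊢
    linarith

theorem exists_conjF_eq_coupS_isNegDualityPair
    (hconv : Convex ℝ {p : (X × StrongDual ℝ X) × ℝ | f p.1 ≤ (p.2 : EReal)})
    (hproper : ∃ z, f z ≠ ⊤) (hge : ∀ z, ((coup X z : ℝ) : EReal) ≤ f z)
    (hgeS : ∀ p, ((coupS X p : ℝ) : EReal) ≤ conjF X f p) (z : X × StrongDual ℝ X) :
    ∃ zs, conjF X f zs = coupS X zs ∧ IsNegDualityPair (hatz X z - zs) := by
  obtain ⟨zs, κ, hmin, hnear⟩ := exists_affine_minorant_near hconv hproper hge z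
  have hconj : conjF X f zs ≤ ((-κ : ℝ) : EReal) := conjF_le_of_affine_le hmin
  have hκ : coupS X zs ≤ -κ := EReal.coe_le_coe_iff.1 ((hgeS zs).trans hconj)
  have hexp : (hatz X z - zs).2 (hatz X z - zs).1
      = coup X z - (zs.1 z.1 + zs.2 z.2) + coupS X zs := by
    simp only [coupS, hatz, Prod.snd_sub, Prod.fst_sub, sub_apply, dual_def, map_sub, coup]
    ring
  have hv : IsNegDualityPair (hatz X z - zs) := isNegDualityPair_of_apply_le (by linarith)
  refine ⟨zs, le_antisymm (hconj.trans (EReal.coe_le_coe_iff.2 ?_)) (hgeS zs), hv⟩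
  rw [← hv.1] at hnear
  linarith [hv.2]

end Conjugate

theorem stmt2_general {X : Type*} [NormedAddCommGroup X] [NormedSpace ℝ X]
    (f : X × StrongDual ℝ X → EReal)
    (hproper : ∃ z, f z ≠ ⊤)
    (hconv : Convex ℝ {p : (X × StrongDual ℝ X) × ℝ | f p.1 ≤ (p.2 : EReal)})
    (hge : ∀ z, ((coup X z : ℝ) : EReal) ≤ f z)
    (hgeS : ∀ p, ((coupS X p : ℝ) : EReal) ≤ conjF X f p)
    (z : X × StrongDual ℝ X) :
    ∃ zs : StrongDual ℝ X × StrongDual ℝ (StrongDual ℝ X),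
      conjF X f zs = ((coupS X zs : ℝ) : EReal) ∧
      ‖(hatz X z - zs).1‖ ^ 2 = ‖(hatz X z - zs).2‖ ^ 2 ∧
      ‖(hatz X z - zs).1‖ ^ 2 = -((hatz X z - zs).2 (hatz X z - zs).1) ∧
      ((nrm2 (hatz X z - zs) ^ 2 : ℝ) : EReal)
        ≤ 2 * (conjF X f (hatz X z) - ((coupS X (hatz X z) : ℝ) : EReal)) ∧
      (Real.sqrt 2 - 1) * nrm2 (hatz X z - zs)
        ≤ sInf ((fun w => nrm2 (hatz X z - w)) ''
            {p : StrongDual ℝ X × StrongDual ℝ (StrongDual ℝ X) | conjF X f p = ((coupS X p : ℝ) : EReal)}) ∧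
      ((sInf ((fun w => nrm2 (hatz X z - w)) ''
            {p : StrongDual ℝ X × StrongDual ℝ (StrongDual ℝ X) | conjF X f p = ((coupS X p : ℝ) : EReal)}) ^ 2
          : ℝ) : EReal)
        ≤ 2 * (conjF X f (hatz X z) - ((coupS X (hatz X z) : ℝ) : EReal)) := by
  obtain ⟨zs, hM, hv⟩ := exists_conjF_eq_coupS_isNegDualityPair hconv hproper hge hgeS z
  have hbound : ((nrm2 (hatz X z - zs) ^ 2 : ℝ) : EReal)
      ≤ 2 * (conjF X f (hatz X z) - coupS X (hatz X z)) := by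
    rw [hv.nrm2_sq]
    exact EReal.coe_two_mul_neg_le_two_mul_sub (coupS_sub_coupS_sub_le_conjF hgeS hM (hatz X z))
  have hnonneg : ∀ d ∈ (fun w => nrm2 (hatz X z - w)) '' {p | conjF X f p = coupS X p}, 0 ≤ d := by
    rintro _ ⟨w, -, rfl⟩
    exact Real.sqrt_nonneg _
  have hdist : ∀ d ∈ (fun w => nrm2 (hatz X z - w)) '' {p | conjF X f p = coupS X p},
      (Real.sqrt 2 - 1) * nrm2 (hatz X z - zs) ≤ d := by
    rintro _ ⟨w, hw, rfl⟩
    refine hv.sqrt_two_sub_one_mul_nrm2_le ?_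
    rw [sub_sub_sub_cancel_left]
    exact coupS_sub_nonneg hgeS hM hw
  have hle := csInf_le ⟨0, hnonneg⟩ (mem_image_of_mem (fun w => nrm2 (hatz X z - w)) hM)
  refine ⟨zs, hM, by rw [hv.1], by rw [hv.2]; ring, hbound, le_csInf ⟨_, zs, hM, rfl⟩ hdist, ?_⟩
  exact (EReal.coe_le_coe_iff.2 (pow_le_pow_left₀ (Real.sInf_nonneg hnonneg) hle 2)).trans hbound

/-- for `f ∈ G(Z)` and `z ∈ Z` there is `z* ∈ M_{f*}` with
`ẑ - z* ∈ gph(-F_{X*})` and `‖ẑ - z*‖² ≤ 2(f*(ẑ) - c(ẑ))`; moreover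
`(√2 - 1)‖ẑ - z*‖ ≤ d(ẑ, M_{f*})` and `d(ẑ, M_{f*})² ≤ 2(f*(ẑ) - c(ẑ))`
(the latter expressing `d(ẑ, M_{f*}) ≤ √(2(f*(ẑ) - c(ẑ)))`). -/
theorem stmt2 {X : Type*} [NormedAddCommGroup X] [NormedSpace ℝ X] [CompleteSpace X]
    (f : X × StrongDual ℝ X → EReal)
    (hne_bot : ∀ z, f z ≠ ⊥) (hproper : ∃ z, f z ≠ ⊤)
    (hconv : Convex ℝ {p : (X × StrongDual ℝ X) × ℝ | f p.1 ≤ (p.2 : EReal)})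
    (hge : ∀ z, ((coup X z : ℝ) : EReal) ≤ f z)
    (hgeS : ∀ p, ((coupS X p : ℝ) : EReal) ≤ conjF X f p)
    (z : X × StrongDual ℝ X) :
    ∃ zs : StrongDual ℝ X × StrongDual ℝ (StrongDual ℝ X),
      conjF X f zs = ((coupS X zs : ℝ) : EReal) ∧
      ‖(hatz X z - zs).1‖ ^ 2 = ‖(hatz X z - zs).2‖ ^ 2 ∧
      ‖(hatz X z - zs).1‖ ^ 2 = -((hatz X z - zs).2 (hatz X z - zs).1) ∧
      ((nrm2 (hatz X z - zs) ^ 2 : ℝ) : EReal)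
        ≤ 2 * (conjF X f (hatz X z) - ((coupS X (hatz X z) : ℝ) : EReal)) ∧
      (Real.sqrt 2 - 1) * nrm2 (hatz X z - zs)
        ≤ sInf ((fun w => nrm2 (hatz X z - w)) ''
            {p : StrongDual ℝ X × StrongDual ℝ (StrongDual ℝ X) | conjF X f p = ((coupS X p : ℝ) : EReal)}) ∧
      ((sInf ((fun w => nrm2 (hatz X z - w)) ''
            {p : StrongDual ℝ X × StrongDual ℝ (StrongDual ℝ X) | conjF X f p = ((coupS X p : ℝ) : EReal)}) ^ 2
          : ℝ) : EReal)
        ≤ 2 * (conjF X f (hatz X z) - ((coupS X (hatz X z) : ℝ) : EReal)) :=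
  stmt2_general f hproper hconv hge hgeS z
end
end

section
/- Let f : Z → ℝ ∪ {+∞} be such that inf_{w ∈ Z} ( f_z(w) + h(w) ) = 0 for every z ∈ Z. Then f ≥ c on Z. If moreover f is convex, then f ∈ F(Z) and f*(z*) ≥ c(z*) for every z* of the form z* = ŵ + (v*, v**) with w ∈ Z and (v*, v**) in the graph of −F_{X*} (i.e., ‖v*‖² = ‖v**‖² = −⟨v*, v**⟩). -/
/-!
Taking `w = 0` in the infimum gives `f ≥ c`. For `z* = ŵ + (v*, v**)` and any `u`, testing `f*`
at `w + u` gives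
`⟨w + u, z*⟩ - f(w + u) = c(z*) - (f_w(u) + h(u)) + (⟨u.1, v*⟩ + ⟨u.2, v**⟩ + h(u) - ⟨v*, v**⟩)`,
and the last bracket is nonnegative because `⟨x, φ⟩ ≥ -(‖φ‖² + ‖x‖²)/2` and
`⟨v*, v**⟩ = -‖v*‖² = -(‖v*‖² + ‖v**‖²)/2`. Since `inf_u (f_w(u) + h(u)) = 0`, this yields
`f*(z*) ≥ c(z*)`.
-/

open NormedSpace

noncomputable section

/-- membership in the class `F(Z)`: proper, convex, `≥ c` on `Z`. -/
def memF (X : Type*) [NormedAddCommGroup X] [NormedSpace ℝ X]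
    (f : X × StrongDual ℝ X → EReal) : Prop :=
  (∀ z, f z ≠ ⊥) ∧ (∃ z, f z ≠ ⊤) ∧
    Convex ℝ {p : (X × StrongDual ℝ X) × ℝ | f p.1 ≤ (p.2 : EReal)} ∧
    ∀ z, ((coup X z : ℝ) : EReal) ≤ f z

lemma neg_half_sq_add_sq_le_apply {E : Type*} [NormedAddCommGroup E] [NormedSpace ℝ E]
    (φ : StrongDual ℝ E) (x : E) : -((‖φ‖ ^ 2 + ‖x‖ ^ 2) / 2) ≤ φ x := by
  have h := neg_le_of_abs_le (φ.le_opNorm x)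
  nlinarith [sq_nonneg (‖φ‖ - ‖x‖)]

lemma EReal.coe_le_of_forall_coe_sub_le_of_iInf_nonpos {ι : Type*} {g : ι → EReal} {a : ℝ}
    {b : EReal} (hg : ⨅ i, g i ≤ 0) (h : ∀ i, (a : EReal) - g i ≤ b) : (a : EReal) ≤ b := by
  by_contra! hba
  obtain ⟨i, hi⟩ := iInf_lt_iff.1 (hg.trans_lt (EReal.sub_pos.2 hba))
  have hab : (a : EReal) ≤ b + g i :=
    (EReal.sub_le_iff_le_add (.inr hba.ne_top) (.inl (hi.trans_le le_top).ne)).1 (h i)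
  exact (EReal.add_lt_of_lt_sub hi).not_ge (by rwa [add_comm])

section

variable {X : Type*} [NormedAddCommGroup X] [NormedSpace ℝ X]

/-- The paper's `f_z(w)`. -/
def fShift (f : X × StrongDual ℝ X → EReal) (z w : X × StrongDual ℝ X) : EReal :=
  f (z + w) - (coup X (z + w) : EReal) + (coup X w : EReal)

lemma coup_le_of_nonneg_iInf_fShift_add_hfun {f : X × StrongDual ℝ X → EReal}
    {z : X × StrongDual ℝ X} (h : 0 ≤ ⨅ w, fShift f z w + hfun X w) : (coup X z : EReal) ≤ f z := by
  have h0 : 0 ≤ fShift f z 0 + hfun X 0 := h.trans (iInf_le _ 0)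
  have hc0 : coup X 0 = 0 := by simp [coup]
  have hh0 : hfun X 0 = 0 := by simp [hfun]
  simp only [fShift, add_zero, hc0, hh0, EReal.coe_zero] at h0
  exact (EReal.sub_nonneg (.inr (EReal.coe_ne_top _)) (.inr (EReal.coe_ne_bot _))).1 h0

lemma exists_ne_top_of_iInf_fShift_add_hfun_lt_top {f : X × StrongDual ℝ X → EReal}
    {z : X × StrongDual ℝ X} (h : ⨅ w, fShift f z w + hfun X w < ⊤) : ∃ z', f z' ≠ ⊤ := by
  obtain ⟨w, hw⟩ := iInf_lt_iff.1 h
  refine ⟨z + w, fun htop => ?_⟩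
  simp [fShift, htop] at hw

lemma hatz_add_apply_add_apply (w u : X × StrongDual ℝ X) (vs : StrongDual ℝ X)
    (vss : StrongDual ℝ (StrongDual ℝ X)) :
    (hatz X w + (vs, vss)).1 (w + u).1 + (hatz X w + (vs, vss)).2 (w + u).2 =
      coupS X (hatz X w + (vs, vss)) + coup X (w + u) - coup X u
        + (vs u.1 + vss u.2 - vss vs) := by
  simp only [hatz, coupS, coup, Prod.fst_add, Prod.snd_add, add_apply, map_add,
    dual_def]
  ring

lemma coe_sub_conjF_le (f : X × StrongDual ℝ X → EReal)
    (p : StrongDual ℝ X × StrongDual ℝ (StrongDual ℝ X)) (z : X × StrongDual ℝ X) :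
    ((p.1 z.1 + p.2 z.2 : ℝ) : EReal) - f z ≤ conjF X f p :=
  le_iSup (fun z : X × StrongDual ℝ X => ((p.1 z.1 + p.2 z.2 : ℝ) : EReal) - f z) z

lemma coupS_hatz_add_sub_fShift_add_hfun_le (f : X × StrongDual ℝ X → EReal)
    (w u : X × StrongDual ℝ X) {vs : StrongDual ℝ X} {vss : StrongDual ℝ (StrongDual ℝ X)}
    (h1 : ‖vs‖ ^ 2 = ‖vss‖ ^ 2) (h2 : ‖vs‖ ^ 2 = -(vss vs)) :
    (coupS X (hatz X w + (vs, vss)) : EReal) - (fShift f w u + hfun X u) ≤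
      (((hatz X w + (vs, vss)).1 (w + u).1 + (hatz X w + (vs, vss)).2 (w + u).2 : ℝ) : EReal)
        - f (w + u) := by
  have hreal : coupS X (hatz X w + (vs, vss)) + coup X (w + u) - coup X u - hfun X u ≤
      (hatz X w + (vs, vss)).1 (w + u).1 + (hatz X w + (vs, vss)).2 (w + u).2 := by
    have h₁ := neg_half_sq_add_sq_le_apply vs u.1
    have h₂ := neg_half_sq_add_sq_le_apply vss u.2
    rw [hatz_add_apply_add_apply, hfun]
    linarith
  simp only [fShift]
  induction f (w + u) with
  | bot => simp
  | top => simp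
  | coe r => norm_cast; linarith

end

theorem stmt4_general {X : Type*} [NormedAddCommGroup X] [NormedSpace ℝ X]
    (f : X × StrongDual ℝ X → EReal) (hne_bot : ∀ z, f z ≠ ⊥)
    (hinf : ∀ z : X × StrongDual ℝ X,
      (⨅ w : X × StrongDual ℝ X,
        (f (z + w) - ((coup X (z + w) : ℝ) : EReal) + ((coup X w : ℝ) : EReal)
          + ((hfun X w : ℝ) : EReal))) = 0) :
    (∀ z, ((coup X z : ℝ) : EReal) ≤ f z) ∧
    (Convex ℝ {p : (X × StrongDual ℝ X) × ℝ | f p.1 ≤ (p.2 : EReal)} →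
      memF X f ∧
      ∀ (w : X × StrongDual ℝ X) (vs : StrongDual ℝ X) (vss : StrongDual ℝ (StrongDual ℝ X)),
        ‖vs‖ ^ 2 = ‖vss‖ ^ 2 → ‖vs‖ ^ 2 = -(vss vs) →
        ((coupS X (hatz X w + (vs, vss)) : ℝ) : EReal) ≤ conjF X f (hatz X w + (vs, vss))) := by
  have hge : ∀ z, ((coup X z : ℝ) : EReal) ≤ f z := fun z =>
    coup_le_of_nonneg_iInf_fShift_add_hfun (hinf z).ge
  refine ⟨hge, fun hconv => ⟨⟨hne_bot, ?_, hconv, hge⟩, fun w vs vss h1 h2 => ?_⟩⟩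
  · exact exists_ne_top_of_iInf_fShift_add_hfun_lt_top ((hinf 0).trans_lt EReal.zero_lt_top)
  · exact EReal.coe_le_of_forall_coe_sub_le_of_iInf_nonpos
      (g := fun u => fShift f w u + hfun X u) (hinf w).le fun u =>
        (coupS_hatz_add_sub_fShift_add_hfun_le f w u h1 h2).trans (coe_sub_conjF_le f _ (w + u))

/-- if `f : Z → ℝ ∪ {+∞}` satisfies `inf_w (f_z(w) + h(w)) = 0` for every
`z ∈ Z`, then `f ≥ c`; if moreover `f` is convex then `f ∈ F(Z)` and `f*(z*) ≥ c(z*)`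
for every `z* = ŵ + (v*, v**)` with `w ∈ Z` and `(v*, v**) ∈ gph(-F_{X*})`. -/
theorem stmt4 {X : Type*} [NormedAddCommGroup X] [NormedSpace ℝ X] [CompleteSpace X]
    (f : X × StrongDual ℝ X → EReal) (hne_bot : ∀ z, f z ≠ ⊥)
    (hinf : ∀ z : X × StrongDual ℝ X,
      (⨅ w : X × StrongDual ℝ X,
        (f (z + w) - ((coup X (z + w) : ℝ) : EReal) + ((coup X w : ℝ) : EReal)
          + ((hfun X w : ℝ) : EReal))) = 0) :
    (∀ z, ((coup X z : ℝ) : EReal) ≤ f z) ∧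
    (Convex ℝ {p : (X × StrongDual ℝ X) × ℝ | f p.1 ≤ (p.2 : EReal)} →
      memF X f ∧
      ∀ (w : X × StrongDual ℝ X) (vs : StrongDual ℝ X) (vss : StrongDual ℝ (StrongDual ℝ X)),
        ‖vs‖ ^ 2 = ‖vss‖ ^ 2 → ‖vs‖ ^ 2 = -(vss vs) →
        ((coupS X (hatz X w + (vs, vss)) : ℝ) : EReal) ≤ conjF X f (hatz X w + (vs, vss))) :=
  stmt4_general f hne_bot hinf
end
end

section
/- Let f : Z → ℝ ∪ {+∞} be proper, convex and norm lower semicontinuous, and assume inf_{w ∈ Z} ( f_z(w) + h(w) ) = 0 for every z ∈ Z. Then for every ε > 0 and every (x,x*) ∈ X × X* with f(x,x*) < ⟨x,x*⟩ + ε there exists (x_ε, x_ε*) ∈ M_f such that ‖x − x_ε‖² + ‖x* − x_ε*‖² < 4ε. -/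
/-!
Write `g := f - c`; taking `w = 0` in the hypothesis shows `g ≥ 0`. If `g z ≤ β`, the hypothesis
at `z` gives `w` with `f_z(w) + h(w) < δ`, whence `g (z + w) ≤ δ` because `c + h ≥ 0`. Applying the
hypothesis once more at `w / 2`, where convexity bounds `f (z + w / 2)` by the mean of the values
at `z` and `z + w`, the polarization identity for `c` turns everything into `h(w) ≤ 2 (β + δ)`.
In the `ℓ²`-product of `X` and `X*` the step length is `√(2 h(w))`, so iterating with
`δ = β s^(2k)` gives a geometric Cauchy sequence; its limit lies in `M_f` by lower semicontinuity
and is within `√(4 β (1 + s²)) / (1 - s)` of `z`, which is `< √(4 ε)` once `s` is small.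
-/

open NormedSpace Filter Topology

noncomputable section

/-- `M_f := {z | f z = c z}`. -/
def Mset (X : Type*) [NormedAddCommGroup X] [NormedSpace ℝ X]
    (f : X × StrongDual ℝ X → EReal) : Set (X × StrongDual ℝ X) :=
  {z | f z = ((coup X z : ℝ) : EReal)}

lemma exists_pos_lt_one_mul_one_add_sq_lt {β ε : ℝ} (h : β < ε) :
    ∃ s : ℝ, 0 < s ∧ s < 1 ∧ β * (1 + s ^ 2) < ε * (1 - s) ^ 2 := by
  have hcont : Continuous fun s : ℝ => ε * (1 - s) ^ 2 - β * (1 + s ^ 2) := by fun_prop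
  have hpos : ∀ᶠ s in 𝓝[>] (0 : ℝ), 0 < ε * (1 - s) ^ 2 - β * (1 + s ^ 2) :=
    nhdsWithin_le_nhds <| continuousAt_const.eventually_lt (hcont.tendsto 0) (by simpa using h)
  have hlt : ∀ᶠ s in 𝓝[>] (0 : ℝ), s < 1 :=
    nhdsWithin_le_nhds <| eventually_lt_nhds zero_lt_one
  obtain ⟨s, hs, hs1, hs0⟩ := (hpos.and (hlt.and self_mem_nhdsWithin)).exists
  exact ⟨s, hs0, hs1, by linarith⟩

section Iteration

variable {E : Type*} {A : ℝ → Set E} {K : ℝ}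

lemma exists_seq_mem_of_step [PseudoMetricSpace E]
    (hstep : ∀ β δ, 0 < δ → ∀ z ∈ A β, ∃ z' ∈ A δ, dist z z' ^ 2 ≤ K * (β + δ))
    {b : ℕ → ℝ} (hb : ∀ k, 0 < b k) {z : E} (hz : z ∈ A (b 0)) :
    ∃ u : ℕ → E, u 0 = z ∧ ∀ k, u k ∈ A (b k) ∧
      dist (u k) (u (k + 1)) ^ 2 ≤ K * (b k + b (k + 1)) := by
  choose! next hnext using hstep
  let u : ℕ → E := fun k => Nat.rec z (fun k p => next (b k) (b (k + 1)) p) k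
  have hu : ∀ k, u k ∈ A (b k) := by
    intro k
    induction k with
    | zero => exact hz
    | succ k ih => exact (hnext _ _ (hb _) _ ih).1
  exact ⟨u, rfl, fun k => ⟨hu k, (hnext _ _ (hb _) _ (hu k)).2⟩⟩

theorem exists_forall_pos_mem_of_step [MetricSpace E] [CompleteSpace E]
    (hA_closed : ∀ β, IsClosed (A β)) (hA_mono : Monotone A) (hK : 0 < K)
    (hstep : ∀ β δ, 0 < δ → ∀ z ∈ A β, ∃ z' ∈ A δ, dist z z' ^ 2 ≤ K * (β + δ))
    {z : E} {β ε : ℝ} (hz : z ∈ A β) (hβ : 0 < β) (hβε : β < ε) :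
    ∃ w, (∀ δ > 0, w ∈ A δ) ∧ dist z w ^ 2 < K * ε := by
  obtain ⟨s, hs0, hs1, hsβ⟩ := exists_pos_lt_one_mul_one_add_sq_lt hβε
  obtain ⟨u, hu0, hu⟩ := exists_seq_mem_of_step hstep (b := fun k => β * (s ^ 2) ^ k)
    (fun k => by positivity) (by simpa using hz)
  set C := √(K * β * (1 + s ^ 2))
  have hC : C ^ 2 = K * β * (1 + s ^ 2) := Real.sq_sqrt (by positivity)
  have hdist : ∀ k, dist (u k) (u (k + 1)) ≤ C * s ^ k := by
    intro k
    rw [← pow_le_pow_iff_left₀ dist_nonneg (by positivity) two_ne_zero]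
    calc dist (u k) (u (k + 1)) ^ 2 ≤ K * (β * (s ^ 2) ^ k + β * (s ^ 2) ^ (k + 1)) := (hu k).2
      _ = (C * s ^ k) ^ 2 := by rw [mul_pow, hC]; ring
  obtain ⟨w, hw⟩ := cauchySeq_tendsto_of_complete (cauchySeq_of_le_geometric s C hs1 hdist)
  refine ⟨w, fun δ hδ => (hA_closed δ).mem_of_tendsto hw ?_, ?_⟩
  · have hsmall : Tendsto (fun k => β * (s ^ 2) ^ k) atTop (𝓝 0) := by
      simpa using (tendsto_pow_atTop_nhds_zero_of_lt_one (by positivity)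
        (by nlinarith : s ^ 2 < 1)).const_mul β
    filter_upwards [hsmall.eventually (eventually_le_nhds hδ)] with k hk
    exact hA_mono hk (hu k).1
  · have hzw : dist z w ≤ C / (1 - s) :=
      hu0 ▸ dist_le_of_le_geometric_of_tendsto₀ s C hs1 hdist hw
    calc dist z w ^ 2 ≤ (C / (1 - s)) ^ 2 := pow_le_pow_left₀ dist_nonneg hzw 2
      _ = K * (β * (1 + s ^ 2)) / (1 - s) ^ 2 := by rw [div_pow, hC]; ring
      _ < K * ε := by
        rw [div_lt_iff₀ (by nlinarith)]
        nlinarith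

end Iteration

lemma EReal.exists_real_ge_add_lt {x : EReal} {a δ : ℝ} (h : x + a < δ) :
    ∃ r : ℝ, x ≤ r ∧ r + a < δ := by
  induction x using EReal.rec with
  | bot => exact ⟨δ - a - 1, bot_le, by linarith⟩
  | coe x => exact ⟨x, le_rfl, by exact_mod_cast h⟩
  | top => simp at h

section Coupling

variable {X : Type*} [NormedAddCommGroup X] [NormedSpace ℝ X]

lemma continuous_coup : Continuous (coup X) :=
  continuous_snd.clm_apply continuous_fst

lemma coup_add_smul (z w : X × StrongDual ℝ X) (t : ℝ) :
    coup X (z + t • w) = coup X z + t * (z.2 w.1 + w.2 z.1) + t ^ 2 * coup X w := by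
  simp only [coup, Prod.snd_add, Prod.smul_snd, Prod.fst_add, Prod.smul_fst, add_apply, map_add,
    map_smul, smul_eq_mul, smul_apply]
  ring

lemma coup_smul (t : ℝ) (w : X × StrongDual ℝ X) : coup X (t • w) = t ^ 2 * coup X w := by
  simp only [coup, Prod.smul_fst, Prod.smul_snd, map_smul, FunLike.coe_smul, Pi.smul_apply,
    smul_eq_mul]
  ring

lemma hfun_smul (t : ℝ) (w : X × StrongDual ℝ X) : hfun X (t • w) = t ^ 2 * hfun X w := by
  simp only [hfun, Prod.smul_fst, Prod.smul_snd, norm_smul, Real.norm_eq_abs, mul_pow, sq_abs]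
  ring

lemma neg_hfun_le_coup (w : X × StrongDual ℝ X) : -hfun X w ≤ coup X w := by
  have h : |w.2 w.1| ≤ ‖w.2‖ * ‖w.1‖ := w.2.le_opNorm w.1
  have := neg_abs_le (w.2 w.1)
  simp only [coup, hfun]
  nlinarith [sq_nonneg (‖w.1‖ - ‖w.2‖)]

lemma two_mul_hfun_eq_norm_toLp_sq (w : X × StrongDual ℝ X) :
    2 * hfun X w = ‖WithLp.toLp 2 w‖ ^ 2 := by
  rw [WithLp.prod_norm_sq_eq_of_L2, hfun, WithLp.toLp_fst, WithLp.toLp_snd]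
  ring

end Coupling

section Gap

variable {X : Type*} [NormedAddCommGroup X] [NormedSpace ℝ X] {f : X × StrongDual ℝ X → EReal}

/-- The function `f_z`. -/
def shiftFun (f : X × StrongDual ℝ X → EReal) (z w : X × StrongDual ℝ X) : EReal :=
  f (z + w) - ((coup X (z + w) : ℝ) : EReal) + ((coup X w : ℝ) : EReal)

lemma shiftFun_add_hfun (z w : X × StrongDual ℝ X) :
    shiftFun f z w + hfun X w =
      f (z + w) + ((-coup X (z + w) + coup X w + hfun X w : ℝ) : EReal) := by
  simp only [shiftFun, sub_eq_add_neg, add_assoc, EReal.coe_add, EReal.coe_neg]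

lemma nonneg_of_iInf_eq_zero (hinf : ∀ z, ⨅ w, shiftFun f z w + hfun X w = 0)
    (z w : X × StrongDual ℝ X) {r : ℝ} (hr : f (z + w) ≤ r) :
    0 ≤ r - coup X (z + w) + coup X w + hfun X w := by
  have h : (0 : EReal) ≤ f (z + w) + ((-coup X (z + w) + coup X w + hfun X w : ℝ) : EReal) := by
    rw [← shiftFun_add_hfun, ← hinf z]
    exact iInf_le _ w
  have h' : ((0 : ℝ) : EReal) ≤ ((r + (-coup X (z + w) + coup X w + hfun X w) : ℝ) : EReal) := by
    rw [EReal.coe_add]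
    exact h.trans (by gcongr)
  linarith [EReal.coe_le_coe_iff.mp h']

lemma coup_le_of_iInf_eq_zero (hinf : ∀ z, ⨅ w, shiftFun f z w + hfun X w = 0)
    (z : X × StrongDual ℝ X) : ((coup X z : ℝ) : EReal) ≤ f z := by
  by_contra! h
  obtain ⟨r, hfr, hrc⟩ := EReal.lt_iff_exists_real_btwn.mp h
  have h0 := nonneg_of_iInf_eq_zero hinf z 0 (r := r) (by simpa using hfr.le)
  have hc0 : coup X (0 : X × StrongDual ℝ X) = 0 := by simp [coup]
  have hh0 : hfun X (0 : X × StrongDual ℝ X) = 0 := by simp [hfun]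
  rw [add_zero, hc0, hh0] at h0
  exact absurd hrc (not_lt.mpr (EReal.coe_le_coe_iff.mpr (by linarith)))

lemma exists_lt_of_iInf_eq_zero (hinf : ∀ z, ⨅ w, shiftFun f z w + hfun X w = 0)
    (z : X × StrongDual ℝ X) {δ : ℝ} (hδ : 0 < δ) :
    ∃ w, ∃ r : ℝ, f (z + w) ≤ r ∧ r - coup X (z + w) + coup X w + hfun X w < δ := by
  have h : ⨅ w, shiftFun f z w + hfun X w < δ := by
    rw [hinf z]
    exact_mod_cast hδ
  obtain ⟨w, hw⟩ := iInf_lt_iff.mp h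
  rw [shiftFun_add_hfun] at hw
  obtain ⟨r, hr, hrδ⟩ := EReal.exists_real_ge_add_lt hw
  exact ⟨w, r, hr, by linarith⟩

lemma exists_le_coup_add_of_le_coup_add
    (hconv : Convex ℝ {p : (X × StrongDual ℝ X) × ℝ | f p.1 ≤ (p.2 : EReal)})
    (hinf : ∀ z, ⨅ w, shiftFun f z w + hfun X w = 0)
    {z : X × StrongDual ℝ X} {β : ℝ} (hz : f z ≤ ((coup X z + β : ℝ) : EReal))
    {δ : ℝ} (hδ : 0 < δ) :
    ∃ w, f (z + w) ≤ ((coup X (z + w) + δ : ℝ) : EReal) ∧ hfun X w ≤ 2 * (β + δ) := by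
  obtain ⟨w, r, hr, hrδ⟩ := exists_lt_of_iInf_eq_zero hinf z hδ
  have hw := neg_hfun_le_coup w
  refine ⟨w, hr.trans (EReal.coe_le_coe_iff.mpr (by linarith)), ?_⟩
  have hmid : f (z + (1 / 2 : ℝ) • w) ≤ ((r + (coup X z + β)) / 2 : ℝ) := by
    have h := hconv (x := (z + w, r)) (y := (z, coup X z + β)) hr hz
      (by norm_num : (0 : ℝ) ≤ 1 / 2) (by norm_num : (0 : ℝ) ≤ 1 / 2) (by norm_num)
    have hpt : (1 / 2 : ℝ) • (z + w) + (1 / 2 : ℝ) • z = z + (1 / 2 : ℝ) • w := by module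
    simp only [Set.mem_ofPred_eq, Prod.smul_mk, Prod.mk_add_mk, smul_eq_mul, hpt] at h
    convert h using 2
    ring
  have hpos := nonneg_of_iInf_eq_zero hinf z _ hmid
  rw [coup_add_smul, coup_smul, hfun_smul] at hpos
  have hzw := coup_add_smul z w 1
  rw [one_smul] at hzw
  nlinarith

/-- Placed in the `ℓ²`-product, where the distance from `z` to `z + w` is `√(2 h(w))`. -/
def gapSublevel (f : X × StrongDual ℝ X → EReal) (β : ℝ) :
    Set (WithLp 2 (X × StrongDual ℝ X)) :=
  WithLp.ofLp ⁻¹' {z | f z ≤ ((coup X z + β : ℝ) : EReal)}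

lemma isClosed_gapSublevel (hf : LowerSemicontinuous f) (β : ℝ) :
    IsClosed (gapSublevel f β) :=
  (hf.isClosed_epigraph.preimage (continuous_id.prodMk
    (continuous_coe_real_ereal.comp (continuous_coup.add continuous_const)))).preimage
    (WithLp.prod_continuous_ofLp 2 _ _)

lemma monotone_gapSublevel : Monotone (gapSublevel f) := fun _ _ hβγ _ hp =>
  hp.trans (EReal.coe_le_coe_iff.mpr (by linarith))

lemma exists_mem_gapSublevel_dist_sq_le
    (hconv : Convex ℝ {p : (X × StrongDual ℝ X) × ℝ | f p.1 ≤ (p.2 : EReal)})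
    (hinf : ∀ z, ⨅ w, shiftFun f z w + hfun X w = 0)
    (β δ : ℝ) (hδ : 0 < δ) (p : WithLp 2 (X × StrongDual ℝ X)) (hp : p ∈ gapSublevel f β) :
    ∃ p' ∈ gapSublevel f δ, dist p p' ^ 2 ≤ 4 * (β + δ) := by
  obtain ⟨w, hw, hhw⟩ := exists_le_coup_add_of_le_coup_add hconv hinf hp hδ
  refine ⟨p + WithLp.toLp 2 w, hw, ?_⟩
  rw [dist_eq_norm, sub_add_cancel_left, norm_neg, ← two_mul_hfun_eq_norm_toLp_sq]
  linarith

end Gap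

theorem stmt6_general {X : Type*} [NormedAddCommGroup X] [NormedSpace ℝ X] [CompleteSpace X]
    (f : X × StrongDual ℝ X → EReal)
    (hconv : Convex ℝ {p : (X × StrongDual ℝ X) × ℝ | f p.1 ≤ (p.2 : EReal)})
    (hlsc : LowerSemicontinuous f)
    (hinf : ∀ z : X × StrongDual ℝ X,
      (⨅ w : X × StrongDual ℝ X,
        (f (z + w) - ((coup X (z + w) : ℝ) : EReal) + ((coup X w : ℝ) : EReal)
          + ((hfun X w : ℝ) : EReal))) = 0)
    (ε : ℝ) (z : X × StrongDual ℝ X)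
    (hz : f z < ((coup X z + ε : ℝ) : EReal)) :
    ∃ w ∈ Mset X f, ‖z.1 - w.1‖ ^ 2 + ‖z.2 - w.2‖ ^ 2 < 4 * ε := by
  obtain ⟨y, hzy, hyε⟩ := EReal.lt_iff_exists_real_btwn.mp hz
  have hβ : 0 < y - coup X z :=
    sub_pos.mpr (EReal.coe_lt_coe_iff.mp ((coup_le_of_iInf_eq_zero hinf z).trans_lt hzy))
  have hβε : y - coup X z < ε := by linarith [EReal.coe_lt_coe_iff.mp hyε]
  have hzβ : WithLp.toLp 2 z ∈ gapSublevel f (y - coup X z) := by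
    simpa only [gapSublevel, Set.mem_preimage, Set.mem_ofPred_eq, WithLp.ofLp_toLp,
      add_sub_cancel] using hzy.le
  obtain ⟨w, hwA, hdist⟩ := exists_forall_pos_mem_of_step (isClosed_gapSublevel hlsc)
    monotone_gapSublevel (by norm_num) (exists_mem_gapSublevel_dist_sq_le hconv hinf) hzβ hβ hβε
  refine ⟨WithLp.ofLp w, le_antisymm ?_ (coup_le_of_iInf_eq_zero hinf _), ?_⟩
  · refine EReal.le_of_forall_lt_iff_le.mp fun t ht => ?_
    simpa only [gapSublevel, Set.mem_preimage, Set.mem_ofPred_eq, add_sub_cancel] using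
      hwA (t - coup X (WithLp.ofLp w)) (sub_pos.mpr (EReal.coe_lt_coe_iff.mp ht))
  · rwa [dist_eq_norm, WithLp.prod_norm_sq_eq_of_L2] at hdist

/-- Brøndsted–Rockafellar property: if `f : Z → ℝ ∪ {+∞}` is proper, convex,
norm-lsc, and `inf_w (f_z(w) + h(w)) = 0` for every `z`, then for every `ε > 0` and
`(x, x*)` with `f(x, x*) < ⟨x, x*⟩ + ε` there is `(x_ε, x_ε*) ∈ M_f` with
`‖x - x_ε‖² + ‖x* - x_ε*‖² < 4ε`. -/
theorem stmt6 {X : Type*} [NormedAddCommGroup X] [NormedSpace ℝ X] [CompleteSpace X]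
    (f : X × StrongDual ℝ X → EReal)
    (hne_bot : ∀ z, f z ≠ ⊥) (hproper : ∃ z, f z ≠ ⊤)
    (hconv : Convex ℝ {p : (X × StrongDual ℝ X) × ℝ | f p.1 ≤ (p.2 : EReal)})
    (hlsc : LowerSemicontinuous f)
    (hinf : ∀ z : X × StrongDual ℝ X,
      (⨅ w : X × StrongDual ℝ X,
        (f (z + w) - ((coup X (z + w) : ℝ) : EReal) + ((coup X w : ℝ) : EReal)
          + ((hfun X w : ℝ) : EReal))) = 0)
    (ε : ℝ) (hε : 0 < ε) (z : X × StrongDual ℝ X)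
    (hz : f z < ((coup X z + ε : ℝ) : EReal)) :
    ∃ w ∈ Mset X f, ‖z.1 - w.1‖ ^ 2 + ‖z.2 - w.2‖ ^ 2 < 4 * ε :=
  stmt6_general f hconv hlsc hinf ε z hz
end
end
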